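/- arXiv:0904.3500 — 3 statements merged into one kernel-verified Lean document; each statement's English description precedes it below -/
import Mathlib

section
/- Let a, c, d, x be real numbers with d ≥ 1, a > 0, 0 < x, x ≤ a/2, x ≤ c + d, c·a ≤ x², and 1 ≤ c. Then a ≤ (d + 1)². -/
theorem stmt_2 (a c d x : ℝ) (hd : 1 ≤ d) (ha : 0 < a) (hx : 0 < x)
    (hxa : x ≤ a / 2) (hxcd : x ≤ c + d) (hca : c * a ≤ x ^ 2) (hc : 1 ≤ c) :
    a ≤ (d + 1) ^ 2 := by
  have h2c : 2 * c ≤ x := by nlinarith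
  have hcd : c ≤ d := by linarith
  nlinarith [mul_pos hx hx, sq_nonneg (c - 1), sq_nonneg (x - c - d), mul_nonneg (sub_nonneg.2 hcd) (sub_nonneg.2 hc)]
end

section
/- Let h > 0, r ≥ 1, 0 < s < 1, and t > 0 be real numbers, and let c, q, x be real numbers with s·r·h < c < r·h, c ≤ s·r·h + (1−s)·h, q·h ≤ c², and x ≤ q/(2r). Then (2x − 2sc + (s² − t²)·r·h)/(2t(c − s·r·h)) < ((1−s)² − t²)/(2t(1−s)). -/
/-!
Combining the Hodge Index Theorem with the Bogomolov Inequality gives `2x ≤ c²/(rh)`, so the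
numerator is at most `(u² - t²(rh)²)/(rh)` with `u = c - s·r·h`. Hence the left side is at most
`φ(u/(rh))`, where `φ(y) = (y² - t²)/(2ty)` is the slope of a sheaf attaining equality in both
inequalities, and the right side is `φ(1 - s)`. Since `φ` is strictly increasing on `y > 0` and
`u/(rh) < 1 - s` (that is, `μ_H(E′) < 1`), the claim follows.
-/

open Set

noncomputable def bogomolovSlope (t y : ℝ) : ℝ := (y ^ 2 - t ^ 2) / (2 * t * y)

lemma bogomolovSlope_eq (t y : ℝ) (ht : t ≠ 0) (hy : y ≠ 0) :
    bogomolovSlope t y = (y - t ^ 2 / y) / (2 * t) := by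
  unfold bogomolovSlope
  field_simp

lemma strictMonoOn_bogomolovSlope {t : ℝ} (ht : 0 < t) :
    StrictMonoOn (bogomolovSlope t) (Ioi 0) := by
  intro y (hy : 0 < y) z (hz : 0 < z) hyz
  rw [bogomolovSlope_eq t y ht.ne' hy.ne', bogomolovSlope_eq t z ht.ne' hz.ne']
  gcongr

lemma two_mul_le_sq_div_of_hodge_of_bogomolov {h r c q x : ℝ} (hrh : 0 < r * h)
    (hq : q * h ≤ c ^ 2) (hx : x ≤ q / (2 * r)) : 2 * x ≤ c ^ 2 / (r * h) := by
  have hh : h ≠ 0 := right_ne_zero_of_mul hrh.ne'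
  calc 2 * x ≤ q / r := by linarith [show q / (2 * r) = q / r / 2 by ring]
    _ = q * h / (r * h) := by field_simp
    _ ≤ c ^ 2 / (r * h) := by gcongr

lemma div_le_bogomolovSlope {t R u N : ℝ} (ht : 0 < t) (hR : 0 < R) (hu : 0 < u)
    (hN : N ≤ u ^ 2 / R - t ^ 2 * R) : N / (2 * t * u) ≤ bogomolovSlope t (u / R) := by
  have hφ : bogomolovSlope t (u / R) = (u ^ 2 / R - t ^ 2 * R) / (2 * t * u) := by
    unfold bogomolovSlope
    field_simp
  rw [hφ]
  gcongr

theorem stmt_9_general (h r s t c q x : ℝ) (hs1 : s < 1) (ht : 0 < t)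
    (hc1 : s * r * h < c) (hc2 : c < r * h)
    (hq : q * h ≤ c ^ 2) (hx : x ≤ q / (2 * r)) :
    (2 * x - 2 * s * c + (s ^ 2 - t ^ 2) * r * h) / (2 * t * (c - s * r * h)) <
      ((1 - s) ^ 2 - t ^ 2) / (2 * t * (1 - s)) := by
  set R := r * h
  have hR : 0 < R := by nlinarith
  have hu : 0 < c - s * R := by linarith [mul_assoc s r h]
  have hx' := two_mul_le_sq_div_of_hodge_of_bogomolov hR hq hx
  have hnum : 2 * x - 2 * s * c + (s ^ 2 - t ^ 2) * r * h ≤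
      (c - s * R) ^ 2 / R - t ^ 2 * R := by
    have : (c - s * R) ^ 2 / R = c ^ 2 / R - 2 * s * c + s ^ 2 * R := by
      field_simp
      ring
    rw [this]
    linarith [mul_assoc (s ^ 2 - t ^ 2) r h]
  have hslope : (c - s * R) / R < 1 - s := by
    rw [div_lt_iff₀ hR]
    linarith
  calc _ ≤ bogomolovSlope t ((c - s * R) / R) := by
        rw [mul_assoc s r h]
        exact div_le_bogomolovSlope ht hR hu hnum
    _ < bogomolovSlope t (1 - s) :=
        strictMonoOn_bogomolovSlope ht (div_pos hu hR) (sub_pos.2 hs1) hslope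

theorem stmt_9 (h r s t c q x : ℝ) (hh : 0 < h) (hr : 1 ≤ r)
    (hs0 : 0 < s) (hs1 : s < 1) (ht : 0 < t)
    (hc1 : s * r * h < c) (hc2 : c < r * h) (hc3 : c ≤ s * r * h + (1 - s) * h)
    (hq : q * h ≤ c ^ 2) (hx : x ≤ q / (2 * r)) :
    (2 * x - 2 * s * c + (s ^ 2 - t ^ 2) * r * h) / (2 * t * (c - s * r * h)) <
      ((1 - s) ^ 2 - t ^ 2) / (2 * t * (1 - s)) :=
  stmt_9_general h r s t c q x hs1 ht hc1 hc2 hq hx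
end

section
/- Let d > 0 and h > 0 be real numbers. (1) For all real s, t with 0 < s < 1, t > 0, and t² + (s − 1/2)² < 1/4 − 2d/h, one has ((1−s)² − t² − 2d/h)/(2t(1−s)) > (t² − s² + 2d/h)/(2st). (2) There exist real s, t with t > 0 and t² + (s − 1/2)² < 1/4 − 2d/h if and only if h > 8d. -/
theorem stmt_10 (d h : ℝ) (hd : 0 < d) (hh : 0 < h) :
    (∀ s t : ℝ, 0 < s → s < 1 → 0 < t → t ^ 2 + (s - 1 / 2) ^ 2 < 1 / 4 - 2 * d / h →
      ((1 - s) ^ 2 - t ^ 2 - 2 * d / h) / (2 * t * (1 - s)) >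
        (t ^ 2 - s ^ 2 + 2 * d / h) / (2 * s * t)) ∧
    ((∃ s t : ℝ, 0 < t ∧ t ^ 2 + (s - 1 / 2) ^ 2 < 1 / 4 - 2 * d / h) ↔ h > 8 * d) := by
  constructor
  · intro s t hs hs1 ht hsc
    have h1s : 0 < 1 - s := by linarith
    rw [gt_iff_lt, div_lt_div_iff₀ (by positivity) (by positivity)]
    have key : t ^ 2 + 2 * d / h < s * (1 - s) := by nlinarith
    nlinarith [mul_pos ht h1s, mul_pos hs ht, sq_nonneg t]
  · constructor
    · rintro ⟨s, t, ht, hsc⟩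
      have h1 : 2 * d / h < 1 / 4 := by nlinarith [sq_nonneg t, sq_nonneg (s - 1/2)]
      rw [div_lt_iff₀ hh] at h1
      linarith
    · intro h8
      have hc : 0 < 1 / 4 - 2 * d / h := by
        have : 2 * d / h < 1 / 4 := by rw [div_lt_iff₀ hh]; linarith
        linarith
      refine ⟨1/2, Real.sqrt ((1/4 - 2*d/h)/2), Real.sqrt_pos.mpr (by linarith), ?_⟩
      rw [Real.sq_sqrt (by linarith)]
      norm_num
      linarith
end
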